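/- If ∏_{i=0}^{m−1} inf_{x∈X} ‖(Df_i(x))^{−1}‖^{−1} > m^{−m} (i.e. Hata's condition (7.6) holds, where ‖(Df_i(x))^{−1}‖^{−1} := 0 when Df_i(x) is not invertible), then β < 1. -/

import Mathlib

open MeasureTheory Filter Set Topology
open scoped ENNReal

noncomputable section

/-- The first digit `A₁(t) = ⌊m t⌋` of the `m`-adic expansion of `t ∈ [0,1)`. -/
def A1 (m : ℕ) (t : ℝ) : ℕ := (⌊(m : ℝ) * t⌋).toNat

/-- The shift map `Ht = m t - ⌊m t⌋` on `[0,1)`. -/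
def Hmap (m : ℕ) (t : ℝ) : ℝ := (m : ℝ) * t - ⌊(m : ℝ) * t⌋

/-- The `n`-th `m`-adic approximation `t_n = ⌊mⁿ t⌋ / mⁿ` of `t`. -/
def tApprox (m n : ℕ) (t : ℝ) : ℝ := (⌊(m : ℝ) ^ n * t⌋ : ℝ) / (m : ℝ) ^ n

/-- `M_n(t) = ‖G(t_n + m^{-n}) - G(t_n)‖`. -/
def Mseq {E : Type*} [NormedAddCommGroup E] (m : ℕ) (G : ℝ → E) (n : ℕ) (t : ℝ) : ℝ :=
  ‖G (tApprox m n t + ((m : ℝ) ^ n)⁻¹) - G (tApprox m n t)‖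

/-- `-log_m x` as a value in `[0,∞]`, with the convention `-log_m 0 = +∞`. -/
def negLogbE (m : ℕ) (x : ℝ) : ℝ≥0∞ :=
  if x = 0 then ⊤ else ENNReal.ofReal (-Real.logb m x)

/-- `log_m ‖T⁻¹‖` as a value in `[0,∞]`, with the convention that it is `+∞`
when `T` is not invertible (as a continuous linear map). -/
def betaIntegrand {E : Type*} [NormedAddCommGroup E] [NormedSpace ℝ E]
    (m : ℕ) (T : E →L[ℝ] E) : ℝ≥0∞ :=
  ⨅ A : {A : E ≃L[ℝ] E // (A : E →L[ℝ] E) = T},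
    ENNReal.ofReal (Real.logb m ‖(A.1.symm : E →L[ℝ] E)‖)

/-- `‖T⁻¹‖⁻¹`, with the convention that it is `0` when `T` is not invertible. -/
def coNorm {E : Type*} [NormedAddCommGroup E] [NormedSpace ℝ E] (T : E →L[ℝ] E) : ℝ :=
  ⨆ A : {A : E ≃L[ℝ] E // (A : E →L[ℝ] E) = T}, ‖(A.1.symm : E →L[ℝ] E)‖⁻¹

/-- `α = ∫₀¹ -log_m ‖Df_{A₁(t)}(G(Ht))‖ dt`, with `-log_m 0 = +∞`. -/
def alphaDR {E : Type*} [NormedAddCommGroup E] [NormedSpace ℝ E]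
    (m : ℕ) (Df : ℕ → E → E →L[ℝ] E) (G : ℝ → E) : ℝ≥0∞ :=
  ∫⁻ t in Set.Ico (0 : ℝ) 1, negLogbE m ‖Df (A1 m t) (G (Hmap m t))‖

/-- `β = ∫₀¹ log_m ‖(Df_{A₁(t)}(G(Ht)))⁻¹‖ dt`, with `‖T⁻¹‖ = +∞` for non-invertible `T`. -/
def betaDR {E : Type*} [NormedAddCommGroup E] [NormedSpace ℝ E]
    (m : ℕ) (Df : ℕ → E → E →L[ℝ] E) (G : ℝ → E) : ℝ≥0∞ :=
  ∫⁻ t in Set.Ico (0 : ℝ) 1, betaIntegrand m (Df (A1 m t) (G (Hmap m t)))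

end

/-! Where the first digit `A₁(t)` is `i`, the integrand of `β` is at most `-log_m c_i` with
`c_i = inf_X ‖(Df_i)⁻¹‖⁻¹`, so `β ≤ -(1/m) log_m ∏ c_i < 1` by Hata's condition. These bounds
are nonnegative, i.e. `c_i ≤ 1`, because `‖T⁻¹‖⁻¹ ≤ ‖T‖` and at an interior point of `X` the
derivative of a weak contraction has norm at most `1`. -/

section CoNorm

variable {E : Type*} [NormedAddCommGroup E] [NormedSpace ℝ E]

instance subsingleton_continuousLinearEquiv_coe_eq (T : E →L[ℝ] E) :
    Subsingleton {A : E ≃L[ℝ] E // (A : E →L[ℝ] E) = T} :=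
  ⟨fun A B => Subtype.ext <| ContinuousLinearEquiv.ext <|
    congrArg (fun S : E →L[ℝ] E => (S : E → E)) (A.2.trans B.2.symm)⟩

lemma coNorm_coe (A : E ≃L[ℝ] E) :
    coNorm (A : E →L[ℝ] E) = ‖(A.symm : E →L[ℝ] E)‖⁻¹ := by
  let : Unique {B : E ≃L[ℝ] E // (B : E →L[ℝ] E) = A} :=
    { default := ⟨A, rfl⟩, uniq := fun _ => Subsingleton.elim _ _ }
  rw [coNorm, ciSup_unique]
  rfl

lemma coNorm_nonneg (T : E →L[ℝ] E) : 0 ≤ coNorm T :=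
  Real.iSup_nonneg fun _ => inv_nonneg.2 (norm_nonneg _)

lemma iInf_coNorm_le {ι : Type*} (g : ι → E →L[ℝ] E) (i : ι) :
    ⨅ j, coNorm (g j) ≤ coNorm (g i) :=
  ciInf_le ⟨0, Set.forall_mem_range.2 fun _ => coNorm_nonneg _⟩ i

lemma exists_coe_eq_of_coNorm_pos {T : E →L[ℝ] E} (hT : 0 < coNorm T) :
    ∃ A : E ≃L[ℝ] E, (A : E →L[ℝ] E) = T := by
  by_contra! h
  have : IsEmpty {A : E ≃L[ℝ] E // (A : E →L[ℝ] E) = T} := ⟨fun A => h A.1 A.2⟩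
  exact hT.ne' (Real.iSup_of_isEmpty _)

lemma coNorm_le_norm (T : E →L[ℝ] E) : coNorm T ≤ ‖T‖ := by
  rcases (coNorm_nonneg T).eq_or_lt with h | h
  · exact h ▸ norm_nonneg T
  obtain ⟨A, rfl⟩ := exists_coe_eq_of_coNorm_pos h
  rcases subsingleton_or_nontrivial E with _ | _
  · simp [coNorm_coe, norm_of_subsingleton]
  rw [coNorm_coe, inv_le_iff_one_le_mul₀ (norm_pos_iff.2 ?_)]
  · exact A.one_le_norm_mul_norm_symm
  · rintro h0
    rw [coNorm_coe, h0, norm_zero, inv_zero] at h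
    exact h.false

lemma betaIntegrand_le_neg_logb {m : ℕ} (hm : 1 < (m : ℝ)) {T : E →L[ℝ] E} {c : ℝ}
    (hc : 0 < c) (hcT : c ≤ coNorm T) :
    betaIntegrand m T ≤ ENNReal.ofReal (-Real.logb m c) := by
  obtain ⟨A, rfl⟩ := exists_coe_eq_of_coNorm_pos (hc.trans_le hcT)
  rw [coNorm_coe] at hcT
  have hA : 0 < ‖(A.symm : E →L[ℝ] E)‖ := inv_pos.1 (hc.trans_le hcT)
  calc betaIntegrand m A ≤ ENNReal.ofReal (Real.logb m ‖(A.symm : E →L[ℝ] E)‖) :=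
        iInf_le_of_le ⟨A, rfl⟩ le_rfl
    _ ≤ ENNReal.ofReal (-Real.logb m c) := by
        rw [← Real.logb_inv]
        exact ENNReal.ofReal_le_ofReal <| Real.logb_le_logb_of_le hm hA <| le_inv_of_le_inv₀ hc hcT

end CoNorm

lemma LipschitzOnWith.of_norm_sub_lt {E F : Type*} [SeminormedAddCommGroup E]
    [SeminormedAddCommGroup F] {f : E → F} {s : Set E}
    (hf : ∀ x ∈ s, ∀ y ∈ s, x ≠ y → ‖f x - f y‖ < ‖x - y‖) : LipschitzOnWith 1 f s := by
  refine LipschitzOnWith.of_dist_le_mul fun x hx y hy => ?_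
  rcases eq_or_ne x y with rfl | hxy
  · simp
  · simpa [dist_eq_norm] using (hf x hx y hy hxy).le

lemma HasFDerivWithinAt.norm_le_one_of_norm_sub_lt {𝕜 E F : Type*} [NontriviallyNormedField 𝕜]
    [NormedAddCommGroup E] [NormedSpace 𝕜 E] [NormedAddCommGroup F] [NormedSpace 𝕜 F]
    {f : E → F} {f' : E →L[𝕜] F} {s : Set E} {x : E} (hf : HasFDerivWithinAt f f' s x)
    (hx : x ∈ interior s) (hweak : ∀ x ∈ s, ∀ y ∈ s, x ≠ y → ‖f x - f y‖ < ‖x - y‖) :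
    ‖f'‖ ≤ 1 := by
  have hs : s ∈ 𝓝 x := mem_interior_iff_mem_nhds.1 hx
  simpa using (hf.hasFDerivAt hs).le_of_lipschitzOn hs (LipschitzOnWith.of_norm_sub_lt hweak)

section Digits

variable {m : ℕ}

lemma A1_eq_of_mem_Ico (hm : 0 < m) {i : ℕ} {t : ℝ}
    (ht : t ∈ Ico ((i : ℝ) / m) (((i : ℝ) + 1) / m)) : A1 m t = i := by
  have hm' : (0 : ℝ) < m := by exact_mod_cast hm
  rw [mem_Ico, div_le_iff₀ hm', lt_div_iff₀ hm', mul_comm t] at ht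
  rw [A1, Int.floor_eq_iff.2 ⟨by exact_mod_cast ht.1, by push_cast; exact ht.2⟩, Int.toNat_natCast]

lemma Hmap_mem_Icc (t : ℝ) : Hmap m t ∈ Icc (0 : ℝ) 1 :=
  ⟨Int.fract_nonneg _, (Int.fract_lt_one _).le⟩

lemma A1_lt_of_mem_Ico (hm : 0 < m) {t : ℝ} (ht : t ∈ Ico (0 : ℝ) 1) : A1 m t < m := by
  have hm' : (0 : ℝ) < m := by exact_mod_cast hm
  have htm : 0 ≤ m * t := mul_nonneg hm'.le ht.1
  rw [A1, ← Int.natCast_floor_eq_floor htm, Int.toNat_natCast, Nat.floor_lt htm]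
  nlinarith [ht.2]

lemma Ico_zero_one_eq_biUnion (hm : 0 < m) :
    Ico (0 : ℝ) 1 = ⋃ i ∈ Finset.range m, Ico ((i : ℝ) / m) (((i : ℝ) + 1) / m) := by
  have hm' : (0 : ℝ) < m := by exact_mod_cast hm
  ext t
  simp only [mem_Ico, mem_iUnion, Finset.mem_range, div_le_iff₀ hm', lt_div_iff₀ hm',
    exists_prop]
  constructor
  · rintro ⟨h0, h1⟩
    have htm : 0 ≤ t * m := by positivity
    exact ⟨⌊t * m⌋₊, (Nat.floor_lt htm).2 (by nlinarith), Nat.floor_le htm,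
      Nat.lt_floor_add_one _⟩
  · rintro ⟨i, hi, h0, h1⟩
    have : (i : ℝ) + 1 ≤ m := by exact_mod_cast hi
    constructor <;> nlinarith [(Nat.cast_nonneg i : (0 : ℝ) ≤ i)]

lemma setLIntegral_Ico_comp_A1 (hm : 0 < m) (φ : ℕ → ℝ≥0∞) :
    ∫⁻ t in Ico (0 : ℝ) 1, φ (A1 m t) = ∑ i ∈ Finset.range m, φ i * ENNReal.ofReal (1 / m) := by
  have hdisj : (Finset.range m : Set ℕ).PairwiseDisjoint
      fun i : ℕ => Ico ((i : ℝ) / m) (((i : ℝ) + 1) / m) :=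
    fun i _ j _ hij => Set.disjoint_left.2 fun t hti htj =>
      hij ((A1_eq_of_mem_Ico hm hti).symm.trans (A1_eq_of_mem_Ico hm htj))
  rw [Ico_zero_one_eq_biUnion hm, lintegral_biUnion_finset hdisj (fun _ _ => measurableSet_Ico)]
  refine Finset.sum_congr rfl fun i _ => ?_
  rw [setLIntegral_congr_fun measurableSet_Ico fun t ht => by rw [A1_eq_of_mem_Ico hm ht],
    setLIntegral_const, Real.volume_Ico]
  congr 2
  ring

end Digits

lemma Real.neg_logb_lt_of_inv_pow_lt {b x : ℝ} (hb : 1 < b) (n : ℕ) (hx : (b ^ n)⁻¹ < x) :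
    -Real.logb b x < n := by
  have := Real.logb_lt_logb hb (by positivity) hx
  rw [Real.logb_inv, Real.logb_pow, Real.logb_self_eq_one hb, mul_one] at this
  linarith

lemma sum_ofReal_neg_logb_mul_lt_one {m : ℕ} (hm : 1 < (m : ℝ)) {c : ℕ → ℝ}
    (hc_pos : ∀ i ∈ Finset.range m, 0 < c i) (hc_le_one : ∀ i ∈ Finset.range m, c i ≤ 1)
    (hprod : ((m : ℝ) ^ m)⁻¹ < ∏ i ∈ Finset.range m, c i) :
    ∑ i ∈ Finset.range m, ENNReal.ofReal (-Real.logb m (c i)) * ENNReal.ofReal (1 / m) < 1 := by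
  have hlog_nonneg : ∀ i ∈ Finset.range m, 0 ≤ -Real.logb m (c i) := fun i hi =>
    neg_nonneg.2 <| Real.logb_nonpos hm (hc_pos i hi).le (hc_le_one i hi)
  rw [← Finset.sum_mul, ← ENNReal.ofReal_sum_of_nonneg hlog_nonneg,
    ← ENNReal.ofReal_mul (Finset.sum_nonneg hlog_nonneg), Finset.sum_neg_distrib,
    ← Real.logb_prod _ _ fun i hi => (hc_pos i hi).ne', ENNReal.ofReal_lt_one, mul_one_div,
    div_lt_one (by positivity)]
  exact Real.neg_logb_lt_of_inv_pow_lt hm m hprod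

theorem deRham_beta_lt_one_of_prod_inf_gt
    {E : Type*} [NormedAddCommGroup E] [NormedSpace ℝ E]
    (X : Set E) (hXint : (interior X).Nonempty)
    (m : ℕ) (hm : 2 ≤ m)
    (f : ℕ → E → E) (Df : ℕ → E → E →L[ℝ] E)
    (hweak : ∀ i < m, ∀ x ∈ X, ∀ y ∈ X, x ≠ y → ‖f i x - f i y‖ < ‖x - y‖)
    (hDf : ∀ i < m, ∀ x ∈ X, HasFDerivWithinAt (f i) (Df i x) X x)
    (G : ℝ → E)
    (hGX : Set.MapsTo G (Set.Icc 0 1) X)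
    (hprod : ((m : ℝ) ^ m)⁻¹ < ∏ i ∈ Finset.range m, ⨅ x : X, coNorm (Df i (x : E))) :
    betaDR m Df G < 1 := by
  obtain ⟨x₀, hx₀⟩ := hXint
  have hm0 : 0 < m := by omega
  have hm1 : (1 : ℝ) < m := by exact_mod_cast hm
  set c : ℕ → ℝ := fun i => ⨅ x : X, coNorm (Df i (x : E))
  have hc_le : ∀ i, ∀ x ∈ X, c i ≤ coNorm (Df i x) := fun i x hx =>
    iInf_coNorm_le (fun y : X => Df i y) ⟨x, hx⟩
  have hc_pos : ∀ i ∈ Finset.range m, 0 < c i := fun i hi =>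
    (Real.iInf_nonneg fun _ => coNorm_nonneg _).lt_of_ne
      (Finset.prod_ne_zero_iff.1 (hprod.trans' (by positivity)).ne' i hi).symm
  have hc_le_one : ∀ i ∈ Finset.range m, c i ≤ 1 := fun i hi =>
    (hc_le i x₀ (interior_subset hx₀)).trans <| (coNorm_le_norm _).trans <|
      (hDf i (Finset.mem_range.1 hi) x₀ (interior_subset hx₀)).norm_le_one_of_norm_sub_lt hx₀
        (hweak i (Finset.mem_range.1 hi))
  calc betaDR m Df G ≤ ∫⁻ t in Ico (0 : ℝ) 1, ENNReal.ofReal (-Real.logb m (c (A1 m t))) :=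
        setLIntegral_mono' measurableSet_Ico fun t ht =>
          betaIntegrand_le_neg_logb hm1 (hc_pos _ (Finset.mem_range.2 (A1_lt_of_mem_Ico hm0 ht)))
            (hc_le _ _ (hGX (Hmap_mem_Icc t)))
    _ = ∑ i ∈ Finset.range m, ENNReal.ofReal (-Real.logb m (c i)) * ENNReal.ofReal (1 / m) :=
        setLIntegral_Ico_comp_A1 hm0 fun i => ENNReal.ofReal (-Real.logb m (c i))
    _ < 1 := sum_ofReal_neg_logb_mul_lt_one hm1 hc_pos hc_le_one hprod
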